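/- arXiv:1912.10638 — 3 statements merged into one kernel-verified Lean document; each statement's English description precedes it below -/
import Mathlib

section
/- For all real x₁, x₂ with 0 < x₁, 0 < x₂ and x₁ + x₂ < 1, the real part of the potential function satisfies Re Φ(x₁, x₂) = (1/π)·[−2Λ(π(x₁+x₂)) + 2Λ(πx₂) + Λ(πx₁)]. -/
open Real

/-- The dilogarithm `Li₂(z) = -∫₀¹ log(1 - t z)/t dt` (principal branch of `log`). -/
noncomputable def Li2 (z : ℂ) : ℂ :=
  -∫ t in (0:ℝ)..1, Complex.log (1 - (t:ℂ) * z) / (t:ℂ)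

/-- The Lobachevsky function `Λ(θ) = -∫₀^θ log|2 sin t| dt`. -/
noncomputable def Lob (θ : ℝ) : ℝ :=
  -∫ t in (0:ℝ)..θ, Real.log |2 * Real.sin t|

/-- The potential function of the Whitehead link (at `s₁ = s₂ = 1`). -/
noncomputable def Phi0 (z₁ z₂ : ℂ) : ℂ :=
  (1 / (2 * (π:ℂ) * Complex.I)) *
    (Li2 (Complex.exp (-(2 * (π:ℂ) * Complex.I) * (z₁ + z₂)))
     - Li2 (Complex.exp (-(2 * (π:ℂ) * Complex.I) * z₂))
     + Li2 (Complex.exp (2 * (π:ℂ) * Complex.I * z₂))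
     - Li2 (Complex.exp (2 * (π:ℂ) * Complex.I * (z₁ + z₂)))
     + Li2 (Complex.exp (2 * (π:ℂ) * Complex.I * z₁)))

/-!
Differentiating under the integral sign gives `Li₂'(z) = -log(1 - z)/z` on `Re z < 1`, hence
`d/dθ Im Li₂(e^{iθ}) = -log |1 - e^{iθ}| = -log |2 sin(θ/2)|`, the derivative of `2Λ(θ/2)`.
Both sides vanish at `θ = π` (`Li₂(-1)` is real, and `Λ(π/2) = 0` by Euler's
`∫₀^{π/2} log sin = -(π/2) log 2`), so `Im Li₂(e^{iθ}) = 2Λ(θ/2)` on `(0, 2π)`. With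
`Li₂(z̄) = conj Li₂(z)`, each of the five terms of `Re Φ = Im(…)/(2π)` is a multiple of a
value of `Λ`.
-/

open MeasureTheory intervalIntegral Set Topology Interval ComplexConjugate

lemma one_sub_le_re_one_sub_mul {w : ℂ} {c t : ℝ} (hc : 0 ≤ c) (hw : w.re ≤ c)
    (ht : t ∈ Icc (0:ℝ) 1) : 1 - c ≤ (1 - t * w).re := by
  simp only [Complex.sub_re, Complex.one_re, Complex.re_ofReal_mul]
  nlinarith [ht.1, ht.2]

lemma re_one_sub_mul_pos {z : ℂ} (hz : z.re < 1) {t : ℝ} (ht : t ∈ Icc (0:ℝ) 1) :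
    0 < (1 - t * z).re := by
  have := one_sub_le_re_one_sub_mul (le_max_right z.re 0) (le_max_left z.re 0) ht
  linarith [max_lt hz one_pos]

lemma one_sub_mul_mem_slitPlane {z : ℂ} (hz : z.re < 1) {t : ℝ} (ht : t ∈ Icc (0:ℝ) 1) :
    1 - t * z ∈ Complex.slitPlane :=
  Or.inl (re_one_sub_mul_pos hz ht)

lemma Li2_conj {z : ℂ} (hz : z.re < 1) : Li2 (conj z) = conj (Li2 z) := by
  have hcomm := Complex.conjLIE.toLinearIsometry.intervalIntegral_comp_comm (a := 0) (b := 1)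
    (μ := volume) fun t : ℝ => Complex.log (1 - t * z) / t
  simp only [LinearIsometryEquiv.coe_toLinearIsometry, Complex.conjLIE_apply] at hcomm
  rw [Li2, Li2, map_neg, ← hcomm]
  congr 1
  refine integral_congr fun t ht => ?_
  rw [uIcc_of_le zero_le_one] at ht
  have harg : (1 - t * z).arg ≠ π := fun h =>
    lt_asymm (Complex.arg_eq_pi_iff.mp h).1 (re_one_sub_mul_pos hz ht)
  simp [map_div₀, ← Complex.log_conj _ harg]

lemma Li2_ofReal_im {x : ℝ} (hx : x < 1) : (Li2 x).im = 0 := by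
  have h := Li2_conj (z := x) (by simpa using hx)
  rw [Complex.conj_ofReal] at h
  exact Complex.conj_eq_iff_im.mp h.symm

lemma hasDerivAt_log_one_sub_ofReal_mul {z : ℂ} (hz : z.re < 1) {t : ℝ}
    (ht : t ∈ Icc (0:ℝ) 1) :
    HasDerivAt (fun s : ℝ => Complex.log (1 - s * z)) (-z / (1 - t * z)) t := by
  have h := (((hasDerivAt_id t).ofReal_comp).mul_const z).const_sub 1
  exact (h.clog_real (one_sub_mul_mem_slitPlane hz ht)).congr_deriv (by simp)

lemma intervalIntegrable_log_one_sub_mul_div {z : ℂ} (hz : z.re < 1) :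
    IntervalIntegrable (fun t : ℝ => Complex.log (1 - t * z) / t) volume 0 1 := by
  set g := fun s : ℝ => Complex.log (1 - s * z)
  have hcont : ContinuousOn (dslope g 0) (uIcc 0 1) := by
    intro t ht
    rw [uIcc_of_le zero_le_one] at ht
    have hg : DifferentiableAt ℝ g t := (hasDerivAt_log_one_sub_ofReal_mul hz ht).differentiableAt
    refine ContinuousAt.continuousWithinAt ?_
    rcases eq_or_ne t 0 with rfl | ht0
    · exact continuousAt_dslope_same.2 hg
    · exact (continuousAt_dslope_of_ne ht0).2 hg.continuousAt
  -- the integrand is the slope of `g` at `0`, which extends continuously to `t = 0`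
  refine (intervalIntegrable_congr fun t ht => ?_).1 hcont.intervalIntegrable
  rw [uIoc_of_le zero_le_one] at ht
  simp [dslope_of_ne _ ht.1.ne', slope_def_module, g, Complex.real_smul, div_eq_inv_mul]

lemma hasDerivAt_Li2 {z : ℂ} (hz : z.re < 1) (hz0 : z ≠ 0) :
    HasDerivAt Li2 (-Complex.log (1 - z) / z) z := by
  obtain ⟨c, hc0, hc1, hzc⟩ : ∃ c : ℝ, 0 ≤ c ∧ c < 1 ∧ z.re < c :=
    ⟨(1 + max z.re 0) / 2, by positivity, by linarith [max_lt hz one_pos],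
      by linarith [le_max_left z.re 0]⟩
  have hs : {w : ℂ | w.re < c} ∈ 𝓝 z :=
    (isOpen_lt Complex.continuous_re continuous_const).mem_nhds hzc
  have hbound : ∀ t ∈ Ι (0:ℝ) 1, ∀ w ∈ {w : ℂ | w.re < c},
      ‖-1 / (1 - t * w)‖ ≤ (1 - c)⁻¹ := by
    intro t ht w hw
    rw [uIoc_of_le zero_le_one] at ht
    have hre := one_sub_le_re_one_sub_mul hc0 (le_of_lt hw) (Ioc_subset_Icc_self ht)
    rw [norm_div, norm_neg, norm_one, one_div]
    exact inv_anti₀ (by linarith) (hre.trans (Complex.re_le_norm _))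
  have hdiff : ∀ t ∈ Ι (0:ℝ) 1, ∀ w ∈ {w : ℂ | w.re < c},
      HasDerivAt (fun w => Complex.log (1 - t * w) / t) (-1 / (1 - t * w)) w := by
    intro t ht w hw
    rw [uIoc_of_le zero_le_one] at ht
    have hslit := one_sub_mul_mem_slitPlane (lt_trans hw hc1) (Ioc_subset_Icc_self ht)
    have ht0 : (t : ℂ) ≠ 0 := by exact_mod_cast ht.1.ne'
    exact ((((hasDerivAt_id w).const_mul (t : ℂ)).const_sub 1).clog hslit).div_const (t : ℂ)
      |>.congr_deriv (by simp [field])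
  obtain ⟨hint, hD⟩ := hasDerivAt_integral_of_dominated_loc_of_deriv_le (μ := volume) (a := 0)
    (b := 1) (bound := fun _ => (1 - c)⁻¹) hs
    (Filter.Eventually.of_forall fun w => (by fun_prop : Measurable _).aestronglyMeasurable)
    (intervalIntegrable_log_one_sub_mul_div hz)
    (by fun_prop : Measurable _).aestronglyMeasurable
    (Filter.Eventually.of_forall hbound) intervalIntegrable_const
    (Filter.Eventually.of_forall hdiff)
  have hFTC : ∫ t in (0:ℝ)..1, -1 / (1 - t * z) = Complex.log (1 - z) / z := by
    rw [integral_eq_sub_of_hasDerivAt (f := fun t : ℝ => Complex.log (1 - t * z) / z)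
      (fun t ht => ?_) hint]
    · simp
    · rw [uIcc_of_le zero_le_one] at ht
      exact ((hasDerivAt_log_one_sub_ofReal_mul hz ht).div_const z).congr_deriv (by field_simp)
  have h := hD.neg
  rwa [hFTC, ← neg_div] at h

lemma re_exp_mul_I_lt_one {θ : ℝ} (h0 : 0 < θ) (h2 : θ < 2 * π) :
    (Complex.exp (θ * Complex.I)).re < 1 := by
  rw [Complex.exp_ofReal_mul_I_re]
  refine (Real.cos_le_one θ).lt_of_ne fun h => h0.ne' ?_
  exact (Real.cos_eq_one_iff_of_lt_of_lt (by linarith) h2).1 h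

lemma hasDerivAt_im_Li2_exp_mul_I {θ : ℝ} (h0 : 0 < θ) (h2 : θ < 2 * π) :
    HasDerivAt (fun θ : ℝ => (Li2 (Complex.exp (θ * Complex.I))).im)
      (-Real.log |2 * Real.sin (θ / 2)|) θ := by
  set e := Complex.exp (θ * Complex.I)
  have hre : e.re < 1 := re_exp_mul_I_lt_one h0 h2
  have hexp : HasDerivAt (fun θ : ℝ => Complex.exp (θ * Complex.I)) (e * Complex.I) θ :=
    ((hasDerivAt_id θ).ofReal_comp.mul_const Complex.I).cexp.congr_deriv (by simp [e])
  have h := Complex.imCLM.hasFDerivAt.comp_hasDerivAt θ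
    ((hasDerivAt_Li2 hre (Complex.exp_ne_zero _)).comp θ hexp)
  refine h.congr_deriv ?_
  have hnorm : ‖1 - e‖ = |2 * Real.sin (θ / 2)| := by
    rw [norm_sub_rev, ← Real.norm_eq_abs, ← Complex.norm_exp_I_mul_ofReal_sub_one, mul_comm]
  have hcancel :
      -Complex.log (1 - e) / e * (e * Complex.I) = -Complex.log (1 - e) * Complex.I := by
    have he : e ≠ 0 := Complex.exp_ne_zero _
    field_simp
  simp [hcancel, Complex.log_re, hnorm]

lemma intervalIntegrable_log_abs_two_mul_sin (a b : ℝ) :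
    IntervalIntegrable (fun t => Real.log |2 * Real.sin t|) volume a b :=
  (analyticOnNhd_const.mul Real.analyticOnNhd_sin).meromorphicOn.intervalIntegrable_log_norm

lemma hasDerivAt_Lob {x : ℝ} (hx : Real.sin x ≠ 0) :
    HasDerivAt Lob (-Real.log |2 * Real.sin x|) x :=
  (integral_hasDerivAt_right (intervalIntegrable_log_abs_two_mul_sin 0 x)
    (by fun_prop : Measurable _).aestronglyMeasurable.stronglyMeasurableAtFilter
    (by fun_prop (disch := simpa using hx))).neg

lemma Lob_pi_div_two : Lob (π / 2) = 0 := by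
  have h : ∫ t in (0:ℝ)..π / 2, Real.log |2 * Real.sin t| =
      ∫ t in (0:ℝ)..π / 2, (Real.log 2 + Real.log (Real.sin t)) := by
    refine integral_congr_ae (Filter.Eventually.of_forall fun t ht => ?_)
    rw [uIoc_of_le (by positivity)] at ht
    have hsin : 0 < Real.sin t := Real.sin_pos_of_pos_of_lt_pi ht.1 (by linarith [ht.2, pi_pos])
    rw [abs_of_pos (by positivity), Real.log_mul two_ne_zero hsin.ne']
  have hsin : IntervalIntegrable (fun t => Real.log (Real.sin t)) volume 0 (π / 2) :=
    intervalIntegrable_log_sin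
  rw [Lob, h, integral_add intervalIntegrable_const hsin, integral_log_sin_zero_pi_div_two,
    intervalIntegral.integral_const, smul_eq_mul]
  ring

lemma im_Li2_exp_mul_I {θ : ℝ} (h0 : 0 < θ) (h2 : θ < 2 * π) :
    (Li2 (Complex.exp (θ * Complex.I))).im = 2 * Lob (θ / 2) := by
  have hLob : ∀ θ ∈ Ioo 0 (2 * π), HasDerivAt (fun θ : ℝ => 2 * Lob (θ / 2))
      (-Real.log |2 * Real.sin (θ / 2)|) θ := by
    intro θ hθ
    have hsin : Real.sin (θ / 2) ≠ 0 :=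
      (Real.sin_pos_of_pos_of_lt_pi (by linarith [hθ.1]) (by linarith [hθ.2])).ne'
    have h := ((hasDerivAt_Lob hsin).comp θ ((hasDerivAt_id θ).div_const 2)).const_mul 2
    exact h.congr_deriv (by ring)
  have hLi2 : ∀ θ ∈ Ioo 0 (2 * π),
      HasDerivAt (fun θ : ℝ => (Li2 (Complex.exp (θ * Complex.I))).im)
        (-Real.log |2 * Real.sin (θ / 2)|) θ :=
    fun θ hθ => hasDerivAt_im_Li2_exp_mul_I hθ.1 hθ.2
  refine isOpen_Ioo.eqOn_of_deriv_eq isPreconnected_Ioo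
    (fun θ hθ => (hLi2 θ hθ).differentiableAt.differentiableWithinAt)
    (fun θ hθ => (hLob θ hθ).differentiableAt.differentiableWithinAt)
    (fun θ hθ => (hLi2 θ hθ).deriv.trans (hLob θ hθ).deriv.symm)
    (x := π) ⟨pi_pos, by linarith [pi_pos]⟩ ?_ ⟨h0, h2⟩
  have h := Li2_ofReal_im (x := -1) (by norm_num)
  simp only [Complex.exp_pi_mul_I, Lob_pi_div_two]
  simpa using h

lemma ofReal_two_pi_mul_mul_I (x : ℝ) :
    ((2 * π * x : ℝ) : ℂ) * Complex.I = 2 * π * Complex.I * x := by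
  push_cast
  ring

lemma im_Li2_exp_two_pi_I_mul {x : ℝ} (h0 : 0 < x) (h1 : x < 1) :
    (Li2 (Complex.exp (2 * π * Complex.I * x))).im = 2 * Lob (π * x) := by
  have h := im_Li2_exp_mul_I (θ := 2 * π * x) (by positivity) (by nlinarith [pi_pos])
  rwa [ofReal_two_pi_mul_mul_I, show 2 * π * x / 2 = π * x by ring] at h

lemma im_Li2_exp_neg_two_pi_I_mul {x : ℝ} (h0 : 0 < x) (h1 : x < 1) :
    (Li2 (Complex.exp (-(2 * π * Complex.I) * x))).im = -2 * Lob (π * x) := by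
  have hre := re_exp_mul_I_lt_one (θ := 2 * π * x) (by positivity) (by nlinarith [pi_pos])
  have hconj :
      Complex.exp (-(2 * π * Complex.I) * x) = conj (Complex.exp (2 * π * Complex.I * x)) := by
    rw [← Complex.exp_conj]
    simp [map_ofNat]
  rw [ofReal_two_pi_mul_mul_I] at hre
  rw [hconj, Li2_conj hre, Complex.conj_im, im_Li2_exp_two_pi_I_mul h0 h1]
  ring

lemma re_one_div_two_pi_I_mul (w : ℂ) : (1 / (2 * π * Complex.I) * w).re = w.im / (2 * π) := by
  simp [Complex.mul_re, field]

theorem stmt_1 (x₁ x₂ : ℝ) (h1 : 0 < x₁) (h2 : 0 < x₂) (h3 : x₁ + x₂ < 1) :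
    (Phi0 (x₁:ℂ) (x₂:ℂ)).re =
      (1/π) * (-2 * Lob (π*(x₁+x₂)) + 2 * Lob (π*x₂) + Lob (π*x₁)) := by
  have h12 : (x₁ : ℂ) + x₂ = ((x₁ + x₂ : ℝ) : ℂ) := by push_cast; rfl
  have hx₁ : x₁ < 1 := by linarith
  have hx₂ : x₂ < 1 := by linarith
  rw [Phi0, h12, re_one_div_two_pi_I_mul]
  simp only [Complex.add_im, Complex.sub_im]
  rw [im_Li2_exp_neg_two_pi_I_mul (by positivity) h3, im_Li2_exp_neg_two_pi_I_mul h2 hx₂,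
    im_Li2_exp_two_pi_I_mul h2 hx₂, im_Li2_exp_two_pi_I_mul (by positivity) h3,
    im_Li2_exp_two_pi_I_mul h1 hx₁]
  field_simp
  ring
end

section
/- For every integer a and all natural numbers c, d with c + d ≥ 1, the (c+d+1) × (c+d+1) complex matrix H = 2πi·M is invertible (its determinant is nonzero), where M has (0,0) entry (c+d)·i − (c−d)/2 + 2a, entries i in all remaining positions of the first row and first column, entries 2i on the remaining diagonal positions, and 0 elsewhere. (H is the Hessian of the potential function Φ^{(1,1);a,c,d} at its critical point (1/2, 1/4, …, 1/4).) -/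
/-!
`M` is an arrowhead matrix: off the first row and column it is the invertible diagonal `2i`.
A kernel vector `v` of such a matrix is determined by `v 0`, namely `v j = -(M j 0 / M j j) v 0`,
and the first row then forces `v 0` to vanish as soon as the Schur complement
`M 0 0 - ∑_{j ≠ 0} M 0 j M j 0 / M j j` is nonzero. Here that complement equals
`(c + d) i / 2 - (c - d) / 2 + 2a`, whose imaginary part `(c + d) / 2` is positive.
-/

open Real Finset

namespace Matrix

variable {ι K : Type*} [Fintype ι] [Field K] {M : Matrix ι ι K} {p : ι}

theorem mulVec_apply_eq_of_arrowhead (hoff : ∀ i j, i ≠ j → i ≠ p → j ≠ p → M i j = 0)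
    {v : ι → K} {j : ι} (hj : j ≠ p) : (M *ᵥ v) j = M j p * v p + M j j * v j := by
  rw [mulVec, dotProduct, Fintype.sum_eq_add p j hj.symm]
  rintro l ⟨hlp, hlj⟩
  rw [hoff j l (Ne.symm hlj) hj hlp, zero_mul]

theorem eq_of_arrowhead_mulVec_eq_zero (hoff : ∀ i j, i ≠ j → i ≠ p → j ≠ p → M i j = 0)
    {v : ι → K} (hv : M *ᵥ v = 0) {j : ι} (hj : j ≠ p) (hjj : M j j ≠ 0) :
    v j = -(M j p / M j j) * v p := by
  have hrow := congrFun hv j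
  rw [mulVec_apply_eq_of_arrowhead hoff hj, Pi.zero_apply] at hrow
  field_simp
  linear_combination hrow

theorem det_ne_zero_of_arrowhead [DecidableEq ι] (hoff : ∀ i j, i ≠ j → i ≠ p → j ≠ p → M i j = 0)
    (hdiag : ∀ j, j ≠ p → M j j ≠ 0)
    (hschur : M p p - ∑ j ∈ univ.erase p, M p j * M j p / M j j ≠ 0) : M.det ≠ 0 := by
  intro hdet
  obtain ⟨v, hv0, hv⟩ := exists_mulVec_eq_zero_iff.mpr hdet
  have hcoord : ∀ j ∈ univ.erase p, v j = -(M j p / M j j) * v p := fun j hj ↦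
    eq_of_arrowhead_mulVec_eq_zero hoff hv (ne_of_mem_erase hj) (hdiag j (ne_of_mem_erase hj))
  have hvp : v p = 0 := by
    have hrow : M p p * v p + ∑ j ∈ univ.erase p, M p j * v j = 0 := by
      rw [add_sum_erase univ (fun j ↦ M p j * v j) (mem_univ p)]
      exact congrFun hv p
    rw [sum_congr rfl fun j hj ↦ by rw [hcoord j hj]] at hrow
    refine (mul_eq_zero.mp ?_).resolve_left hschur
    rw [sub_mul, sum_mul, ← hrow, sub_eq_add_neg, ← sum_neg_distrib]
    exact congrArg _ (sum_congr rfl fun j _ ↦ by ring)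
  refine hv0 (funext fun j ↦ ?_)
  rcases eq_or_ne j p with rfl | hj
  · exact hvp
  · rw [hcoord j (mem_erase.mpr ⟨hj, mem_univ j⟩), hvp, mul_zero, Pi.zero_apply]

end Matrix

theorem stmt_13 (a : ℤ) (c d : ℕ) (hcd : 1 ≤ c + d)
    (M : Matrix (Fin (c + d + 1)) (Fin (c + d + 1)) ℂ)
    (h00 : M 0 0 = ((c + d : ℕ) : ℂ) * Complex.I - ((c : ℂ) - (d : ℂ)) / 2 + 2 * (a : ℂ))
    (h0j : ∀ j : Fin (c + d + 1), j ≠ 0 → M 0 j = Complex.I)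
    (hj0 : ∀ j : Fin (c + d + 1), j ≠ 0 → M j 0 = Complex.I)
    (hjj : ∀ j : Fin (c + d + 1), j ≠ 0 → M j j = 2 * Complex.I)
    (hij : ∀ i j : Fin (c + d + 1), i ≠ j → i ≠ 0 → j ≠ 0 → M i j = 0) :
    ((2 * (π:ℂ) * Complex.I) • M).det ≠ 0 := by
  rw [Matrix.det_smul]
  refine mul_ne_zero (pow_ne_zero _ (by simp [Real.pi_ne_zero])) ?_
  refine Matrix.det_ne_zero_of_arrowhead hij (fun j hj ↦ by simp [hjj j hj]) ?_
  have hterm : ∀ j ∈ univ.erase (0 : Fin (c + d + 1)), M 0 j * M j 0 / M j j = Complex.I / 2 := by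
    intro j hj
    have hjne := ne_of_mem_erase hj
    rw [h0j j hjne, hj0 j hjne, hjj j hjne]
    field_simp
  rw [sum_congr rfl hterm, sum_const, card_erase_of_mem (mem_univ _), card_univ, Fintype.card_fin,
    Nat.add_sub_cancel, nsmul_eq_mul, h00]
  intro h
  have hpos : (0 : ℝ) < c + d := by exact_mod_cast hcd
  have him : (c + d : ℝ) - (c + d) * 2⁻¹ = 0 := by simpa using congrArg Complex.im h
  linarith
end

section
/- Let x, y, s be real numbers with 0 < x, 0 < y, x + y < s and s < 1. If sin(π(s − x − y))² = sin(π(s − y))², then x + 2y = 2s − 1. -/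
/-!
Both angles `π(s - x - y)` and `π(s - y)` lie in `[0, π]`, where the sine is nonnegative, so equal
squares force equal sines. On `[0, π]` two distinct angles have the same sine only when they are
symmetric about `π/2`, i.e. sum to `π`, and that is the claimed linear relation.
-/

open Real Set

namespace Real

theorem add_eq_pi_of_sin_eq_sin {a b : ℝ} (ha : a ∈ Icc 0 π) (hb : b ∈ Icc 0 π) (hab : a ≠ b)
    (h : sin a = sin b) : a + b = π := by
  have hπ := pi_pos
  have hsin_half_diff : sin ((a - b) / 2) ≠ 0 := by
    rw [Ne, sin_eq_zero_iff_of_lt_of_lt (by linarith [ha.1, hb.2]) (by linarith [ha.2, hb.1])]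
    exact fun h0 => hab (by linarith)
  have hcos_half_sum : cos ((a + b) / 2) = 0 := by
    have h2 := sin_sub_sin a b
    rw [h, sub_self, eq_comm, mul_eq_zero] at h2
    exact h2.resolve_left (mul_ne_zero two_ne_zero hsin_half_diff)
  have hmid : (a + b) / 2 = π / 2 :=
    injOn_cos ⟨by linarith [ha.1, hb.1], by linarith [ha.2, hb.2]⟩ ⟨by linarith, by linarith⟩
      (hcos_half_sum.trans cos_pi_div_two.symm)
  linarith

theorem sin_eq_sin_of_sq_eq_sq {a b : ℝ} (ha : a ∈ Icc 0 π) (hb : b ∈ Icc 0 π)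
    (h : sin a ^ 2 = sin b ^ 2) : sin a = sin b :=
  (sq_eq_sq₀ (sin_nonneg_of_nonneg_of_le_pi ha.1 ha.2)
    (sin_nonneg_of_nonneg_of_le_pi hb.1 hb.2)).1 h

theorem mul_mem_Icc_zero_pi {t : ℝ} (ht : t ∈ Icc 0 1) : π * t ∈ Icc 0 π :=
  ⟨mul_nonneg pi_pos.le ht.1, mul_le_of_le_one_right pi_pos.le ht.2⟩

end Real

theorem stmt_19 (x y s : ℝ) (hx : 0 < x) (hy : 0 < y) (hxy : x + y < s) (hs : s < 1)
    (h : Real.sin (π*(s - x - y))^2 = Real.sin (π*(s - y))^2) :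
    x + 2*y = 2*s - 1 := by
  have ha : π * (s - x - y) ∈ Icc 0 π := mul_mem_Icc_zero_pi ⟨by linarith, by linarith⟩
  have hb : π * (s - y) ∈ Icc 0 π := mul_mem_Icc_zero_pi ⟨by linarith, by linarith⟩
  have hne : π * (s - x - y) ≠ π * (s - y) := fun heq => by
    linarith [mul_left_cancel₀ pi_ne_zero heq]
  have hsum := add_eq_pi_of_sin_eq_sin ha hb hne (sin_eq_sin_of_sq_eq_sq ha hb h)
  have : π * (x + 2 * y - (2 * s - 1)) = 0 := by linarith
  linarith [(mul_eq_zero.1 this).resolve_left pi_ne_zero]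
end
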